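/- The function f₁(p) = 27·(12p^2 + 7p + 1)/∏_{k=1}^6 (kp+1) is strictly decreasing on the interval (0, 1/3); moreover f₁(0) = 27 and f₁(1/3) = 243/160. -/

import Mathlib

/-- `f₁(p) = 27(12p^2+7p+1)/∏_{k=1}^6 (kp+1)`. -/
noncomputable def f₁ (p : ℝ) : ℝ :=
  27 * (12*p^2 + 7*p + 1) /
    ((p+1) * (2*p+1) * (3*p+1) * (4*p+1) * (5*p+1) * (6*p+1))

/-! The numerator factors as `12p² + 7p + 1 = (3p+1)(4p+1)`, so for `p ≥ 0` it cancels against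
two factors of the denominator and `f₁ p = 27 / ((p+1)(2p+1)(5p+1)(6p+1))`, a constant over a
product of positive increasing factors. -/

theorem f₁_eq_of_nonneg {p : ℝ} (hp : 0 ≤ p) :
    f₁ p = 27 / ((p+1) * (2*p+1) * (5*p+1) * (6*p+1)) := by
  have h3 : 3*p+1 ≠ 0 := by positivity
  have h4 : 4*p+1 ≠ 0 := by positivity
  rw [f₁, show 12*p^2 + 7*p + 1 = (3*p+1) * (4*p+1) by ring]
  field_simp

theorem f₁_strictAntiOn_Ici : StrictAntiOn f₁ (Set.Ici 0) := by
  intro x (hx : 0 ≤ x) y (hy : 0 ≤ y) hxy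
  rw [f₁_eq_of_nonneg hx, f₁_eq_of_nonneg hy]
  gcongr

/-- `f₁` is strictly decreasing on `(0,1/3)`; moreover `f₁(0) = 27` and `f₁(1/3) = 243/160`. -/
theorem f1_strictAnti :
    StrictAntiOn f₁ (Set.Ioo (0:ℝ) (1/3)) ∧ f₁ 0 = 27 ∧ f₁ (1/3) = 243/160 :=
  ⟨f₁_strictAntiOn_Ici.mono fun _ hp => hp.1.le, by norm_num [f₁], by norm_num [f₁]⟩
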